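/- For every ψ ∈ ℝ one has F(π, ψ, 0) = (0, sin ψ · (A + B cos ψ), 0) where A = −2K cos α₄ − 2cos α₂ and B = 4r cos 2α₂, and F(ψ, π, 0) = (sin ψ · (A′ + B′ cos ψ), 0, 0) where A′ = 2K cos α₄ − 2cos α₂ and B′ = 4r cos 2α₂. In particular the lines {(π, ψ, 0) : ψ ∈ ℝ} and {(ψ, π, 0) : ψ ∈ ℝ} are invariant under the flow of F. -/

import Mathlib

open Real

/-- Odd part of the pairwise coupling function: `ḡ₂(ϑ) = −cos α₂ sin ϑ + r cos 2α₂ sin 2ϑ`. -/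
noncomputable def gbar2 (α₂ r : ℝ) (ϑ : ℝ) : ℝ :=
  -cos α₂ * sin ϑ + r * cos (2 * α₂) * sin (2 * ϑ)

/-- Odd part of the interpopulation coupling function: `ḡ₄(ϑ) = −cos α₄ sin ϑ`. -/
noncomputable def gbar4 (α₄ : ℝ) (ϑ : ℝ) : ℝ := -cos α₄ * sin ϑ

/-- The reduced phase-difference vector field for M = 3 populations of N = 2 oscillators
(indices taken cyclically in `Fin 3`). -/
noncomputable def F (α₂ α₄ r K : ℝ) (ψ : Fin 3 → ℝ) : Fin 3 → ℝ := fun σ =>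
  2 * gbar2 α₂ r (ψ σ)
    - K / 2 * (gbar4 α₄ (ψ (σ - 1) + ψ σ) + gbar4 α₄ (ψ σ - ψ (σ - 1)))
    + K / 2 * (gbar4 α₄ (ψ (σ + 1) + ψ σ) + gbar4 α₄ (ψ σ - ψ (σ + 1)))

lemma sin_lip (a b : ℝ) : |sin a - sin b| ≤ |a - b| := by
  rw [Real.sin_sub_sin, abs_mul, abs_mul, abs_two]
  have h1 : |sin ((a - b) / 2)| ≤ |(a - b) / 2| := Real.abs_sin_le_abs
  have h2 : |cos ((a + b) / 2)| ≤ 1 := Real.abs_cos_le_one _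
  have h3 : |(a - b) / 2| = |a - b| / 2 := by rw [abs_div]; norm_num
  nlinarith [abs_nonneg (sin ((a - b) / 2)), abs_nonneg (a - b)]

lemma gbar4_lip (α₄ a b : ℝ) : |gbar4 α₄ a - gbar4 α₄ b| ≤ |cos α₄| * |a - b| := by
  unfold gbar4
  rw [← mul_sub, abs_mul, abs_neg]
  exact mul_le_mul_of_nonneg_left (sin_lip a b) (abs_nonneg _)

lemma gbar2_lip (α₂ r a b : ℝ) :
    |gbar2 α₂ r a - gbar2 α₂ r b| ≤ (|cos α₂| + 2 * |r * cos (2 * α₂)|) * |a - b| := by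
  unfold gbar2
  have h1 : |(-cos α₂) * sin a - (-cos α₂) * sin b| ≤ |cos α₂| * |a - b| := by
    rw [← mul_sub, abs_mul, abs_neg]
    exact mul_le_mul_of_nonneg_left (sin_lip a b) (abs_nonneg _)
  have h2 : |r * cos (2 * α₂) * sin (2 * a) - r * cos (2 * α₂) * sin (2 * b)|
      ≤ |r * cos (2 * α₂)| * (2 * |a - b|) := by
    rw [← mul_sub, abs_mul]
    refine mul_le_mul_of_nonneg_left ?_ (abs_nonneg _)
    calc |sin (2 * a) - sin (2 * b)| ≤ |2 * a - 2 * b| := sin_lip _ _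
    _ = 2 * |a - b| := by rw [show (2:ℝ) * a - 2 * b = 2 * (a - b) by ring, abs_mul, abs_two]
  calc |(-cos α₂ * sin a + r * cos (2 * α₂) * sin (2 * a))
        - (-cos α₂ * sin b + r * cos (2 * α₂) * sin (2 * b))|
      ≤ |(-cos α₂) * sin a - (-cos α₂) * sin b|
        + |r * cos (2 * α₂) * sin (2 * a) - r * cos (2 * α₂) * sin (2 * b)| := by
        rw [show (-cos α₂ * sin a + r * cos (2 * α₂) * sin (2 * a))
            - (-cos α₂ * sin b + r * cos (2 * α₂) * sin (2 * b))
            = ((-cos α₂) * sin a - (-cos α₂) * sin b)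
              + (r * cos (2 * α₂) * sin (2 * a) - r * cos (2 * α₂) * sin (2 * b)) by ring]
        exact abs_add_le _ _
    _ ≤ (|cos α₂| + 2 * |r * cos (2 * α₂)|) * |a - b| := by nlinarith [abs_nonneg (a-b)]

lemma F_comp_lip (α₂ α₄ r K : ℝ) (hK : 0 ≤ K) (x y : Fin 3 → ℝ) (σ : Fin 3) (d : ℝ)
    (hd : ∀ i, |x i - y i| ≤ d) (hd0 : 0 ≤ d) :
    |F α₂ α₄ r K x σ - F α₂ α₄ r K y σ|
      ≤ (2 * (|cos α₂| + 2 * |r * cos (2 * α₂)|) + 4 * K * |cos α₄|) * d := by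
  set L2 := |cos α₂| + 2 * |r * cos (2 * α₂)| with hL2
  set L4 := |cos α₄| with hL4
  have hL2n : 0 ≤ L2 := by positivity
  have hL4n : 0 ≤ L4 := abs_nonneg _
  set e2 := gbar2 α₂ r (x σ) - gbar2 α₂ r (y σ) with he2
  set e41 := gbar4 α₄ (x (σ-1) + x σ) - gbar4 α₄ (y (σ-1) + y σ) with he41
  set e42 := gbar4 α₄ (x σ - x (σ-1)) - gbar4 α₄ (y σ - y (σ-1)) with he42
  set e43 := gbar4 α₄ (x (σ+1) + x σ) - gbar4 α₄ (y (σ+1) + y σ) with he43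
  set e44 := gbar4 α₄ (x σ - x (σ+1)) - gbar4 α₄ (y σ - y (σ+1)) with he44
  have hb2 : |e2| ≤ L2 * d := by
    calc |e2| ≤ L2 * |x σ - y σ| := gbar2_lip α₂ r _ _
    _ ≤ L2 * d := mul_le_mul_of_nonneg_left (hd σ) hL2n
  have harg : ∀ i j : Fin 3, |(x i + x j) - (y i + y j)| ≤ 2 * d := by
    intro i j
    calc |(x i + x j) - (y i + y j)| = |(x i - y i) + (x j - y j)| := by ring_nf
    _ ≤ |x i - y i| + |x j - y j| := abs_add_le _ _
    _ ≤ 2 * d := by linarith [hd i, hd j]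
  have harg' : ∀ i j : Fin 3, |(x i - x j) - (y i - y j)| ≤ 2 * d := by
    intro i j
    calc |(x i - x j) - (y i - y j)| = |(x i - y i) - (x j - y j)| := by ring_nf
    _ ≤ |x i - y i| + |x j - y j| := abs_sub _ _
    _ ≤ 2 * d := by linarith [hd i, hd j]
  have hb41 : |e41| ≤ L4 * (2 * d) :=
    le_trans (gbar4_lip _ _ _) (mul_le_mul_of_nonneg_left (harg _ _) hL4n)
  have hb42 : |e42| ≤ L4 * (2 * d) :=
    le_trans (gbar4_lip _ _ _) (mul_le_mul_of_nonneg_left (harg' _ _) hL4n)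
  have hb43 : |e43| ≤ L4 * (2 * d) :=
    le_trans (gbar4_lip _ _ _) (mul_le_mul_of_nonneg_left (harg _ _) hL4n)
  have hb44 : |e44| ≤ L4 * (2 * d) :=
    le_trans (gbar4_lip _ _ _) (mul_le_mul_of_nonneg_left (harg' _ _) hL4n)
  have hexp : F α₂ α₄ r K x σ - F α₂ α₄ r K y σ
      = 2 * e2 - K / 2 * (e41 + e42) + K / 2 * (e43 + e44) := by
    simp only [F, he2, he41, he42, he43, he44]; ring
  rw [hexp]
  have hK2 : (0:ℝ) ≤ K / 2 := by linarith
  have big : |2 * e2 - K / 2 * (e41 + e42) + K / 2 * (e43 + e44)|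
      ≤ 2 * |e2| + K / 2 * (|e41| + |e42|) + K / 2 * (|e43| + |e44|) := by
    calc |2 * e2 - K / 2 * (e41 + e42) + K / 2 * (e43 + e44)|
        ≤ |2 * e2 - K / 2 * (e41 + e42)| + |K / 2 * (e43 + e44)| := abs_add_le _ _
      _ ≤ |2 * e2| + |K / 2 * (e41 + e42)| + |K / 2 * (e43 + e44)| := by
          linarith [abs_sub (2 * e2) (K / 2 * (e41 + e42))]
      _ ≤ 2 * |e2| + K / 2 * (|e41| + |e42|) + K / 2 * (|e43| + |e44|) := by
          rw [abs_mul, abs_mul, abs_mul, abs_two, abs_of_nonneg hK2]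
          have := abs_add_le e41 e42
          have := abs_add_le e43 e44
          have h1 := mul_le_mul_of_nonneg_left (abs_add_le e41 e42) hK2
          have h2 := mul_le_mul_of_nonneg_left (abs_add_le e43 e44) hK2
          linarith
  calc |2 * e2 - K / 2 * (e41 + e42) + K / 2 * (e43 + e44)|
      ≤ 2 * |e2| + K / 2 * (|e41| + |e42|) + K / 2 * (|e43| + |e44|) := big
    _ ≤ 2 * (L2 * d) + K / 2 * (L4 * (2 * d) + L4 * (2 * d))
        + K / 2 * (L4 * (2 * d) + L4 * (2 * d)) := by gcongr
    _ = (2 * L2 + 4 * K * L4) * d := by ring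


lemma F_lipschitz (α₂ α₄ r K : ℝ) (hK : 0 ≤ K) :
    LipschitzWith
      (Real.toNNReal (2 * (|cos α₂| + 2 * |r * cos (2 * α₂)|) + 4 * K * |cos α₄|))
      (F α₂ α₄ r K) := by
  have hC : 0 ≤ 2 * (|cos α₂| + 2 * |r * cos (2 * α₂)|) + 4 * K * |cos α₄| := by positivity
  apply LipschitzWith.of_dist_le_mul
  intro x y
  rw [Real.coe_toNNReal _ hC]
  rw [dist_pi_le_iff (by exact mul_nonneg hC dist_nonneg)]
  intro i
  rw [Real.dist_eq]
  exact F_comp_lip α₂ α₄ r K hK x y i (dist x y)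
    (fun j => by rw [← Real.dist_eq]; exact dist_le_pi_dist x y j) dist_nonneg

lemma ODE_unique_global {E : Type*} [NormedAddCommGroup E] [NormedSpace ℝ E]
    {v : E → E} {C : NNReal} (hv : LipschitzWith C v) {f g : ℝ → E}
    (hf : ∀ t, HasDerivAt f (v (f t)) t) (hg : ∀ t, HasDerivAt g (v (g t)) t)
    (h0 : f 0 = g 0) : ∀ t, f t = g t := by
  intro t
  have hmem : t ∈ Set.Icc (-(|t| + 1)) (|t| + 1) :=
    ⟨by linarith [neg_abs_le t], by linarith [le_abs_self t]⟩
  have h0mem : (0 : ℝ) ∈ Set.Ioo (-(|t| + 1)) (|t| + 1) := by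
    constructor <;> nlinarith [abs_nonneg t]
  exact ODE_solution_unique_of_mem_Icc (v := fun _ x => v x) (s := fun _ => Set.univ)
    (fun _ _ => hv.lipschitzOnWith) h0mem
    (fun s _ => (hf s).continuousAt.continuousWithinAt)
    (fun s _ => hf s) (fun _ _ => Set.mem_univ _)
    (fun s _ => (hg s).continuousAt.continuousWithinAt)
    (fun s _ => hg s) (fun _ _ => Set.mem_univ _) h0 hmem

lemma F_equivar1 (α₂ α₄ r K : ℝ) (ψ : Fin 3 → ℝ) :
    F α₂ α₄ r K ![2 * π - ψ 0, ψ 1, -(ψ 2)]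
      = ![-(F α₂ α₄ r K ψ 0), F α₂ α₄ r K ψ 1, -(F α₂ α₄ r K ψ 2)] := by
  funext σ
  fin_cases σ <;>
    simp [F, gbar2, gbar4, Fin.isValue, sin_add, sin_sub, cos_add, cos_sub, sin_two_mul,
      sin_neg, cos_neg, Real.sin_two_pi, Real.cos_two_pi, show ((-1 : Fin 3)) = 2 from rfl] <;>
    ring

lemma F_equivar2 (α₂ α₄ r K : ℝ) (ψ : Fin 3 → ℝ) :
    F α₂ α₄ r K ![ψ 0, 2 * π - ψ 1, -(ψ 2)]
      = ![F α₂ α₄ r K ψ 0, -(F α₂ α₄ r K ψ 1), -(F α₂ α₄ r K ψ 2)] := by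
  funext σ
  fin_cases σ <;>
    simp [F, gbar2, gbar4, Fin.isValue, sin_add, sin_sub, cos_add, cos_sub, sin_two_mul,
      sin_neg, cos_neg, Real.sin_two_pi, Real.cos_two_pi, show ((-1 : Fin 3)) = 2 from rfl] <;>
    ring

/-- On the lines `D ψ S = {(π, ψ, 0)}` and `ψ D S = {(ψ, π, 0)}` the vector field `F`
reduces to the scalar fields `sin ψ (A + B cos ψ)` resp. `sin ψ (A′ + B′ cos ψ)`; in
particular both lines are invariant under the flow of `F`. -/
theorem invariant_lines_DpS_pDS (α₂ α₄ r K : ℝ) (hK : 0 < K) :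
    (∀ ψ : ℝ,
      F α₂ α₄ r K ![π, ψ, 0]
        = ![0, sin ψ * ((-2 * K * cos α₄ - 2 * cos α₂) + 4 * r * cos (2 * α₂) * cos ψ), 0] ∧
      F α₂ α₄ r K ![ψ, π, 0]
        = ![sin ψ * ((2 * K * cos α₄ - 2 * cos α₂) + 4 * r * cos (2 * α₂) * cos ψ), 0, 0]) ∧
    (∀ η : ℝ → Fin 3 → ℝ,
      (∀ t : ℝ, HasDerivAt η (F α₂ α₄ r K (η t)) t) →
      ((η 0 0 = π ∧ η 0 2 = 0) → ∀ t : ℝ, η t 0 = π ∧ η t 2 = 0) ∧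
      ((η 0 1 = π ∧ η 0 2 = 0) → ∀ t : ℝ, η t 1 = π ∧ η t 2 = 0)) := by
  constructor
  · intro ψ
    constructor <;> funext σ <;> fin_cases σ <;>
      simp [F, gbar2, gbar4, Fin.isValue, sin_add, sin_sub, cos_add, cos_sub, sin_two_mul,
        show ((-1 : Fin 3)) = 2 from rfl] <;> ring
  · intro η hη
    have hlip := F_lipschitz α₂ α₄ r K hK.le
    have hcomp : ∀ t (i : Fin 3), HasDerivAt (fun s => η s i) (F α₂ α₄ r K (η t) i) t :=
      fun t i => (hasDerivAt_pi.1 (hη t)) i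
    constructor
    · rintro ⟨h0, h2⟩ t
      set ζ : ℝ → Fin 3 → ℝ := fun s => ![2 * π - η s 0, η s 1, -(η s 2)] with hζ
      have hζd : ∀ s, HasDerivAt ζ (F α₂ α₄ r K (ζ s)) s := by
        intro s
        rw [hζ]
        apply hasDerivAt_pi.2
        intro i
        have key : F α₂ α₄ r K (ζ s)
            = ![-(F α₂ α₄ r K (η s) 0), F α₂ α₄ r K (η s) 1, -(F α₂ α₄ r K (η s) 2)] :=
          F_equivar1 α₂ α₄ r K (η s)
        rw [key]
        fin_cases i <;> simp only [Matrix.cons_val_zero, Matrix.cons_val_one, Matrix.head_cons,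
          Fin.isValue, Matrix.cons_val_two, Matrix.tail_cons]
        · exact (hcomp s 0).const_sub (2 * π)
        · exact hcomp s 1
        · exact (hcomp s 2).neg
      have hζ0 : ζ 0 = η 0 := by
        funext i
        fin_cases i <;> simp [hζ, h0, h2] <;> ring
      have := ODE_unique_global hlip hζd hη hζ0 t
      have e0 := congrFun this 0
      have e2 := congrFun this 2
      simp [hζ] at e0 e2
      constructor
      · linarith
      · linarith
    · rintro ⟨h1, h2⟩ t
      set ζ : ℝ → Fin 3 → ℝ := fun s => ![η s 0, 2 * π - η s 1, -(η s 2)] with hζ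
      have hζd : ∀ s, HasDerivAt ζ (F α₂ α₄ r K (ζ s)) s := by
        intro s
        rw [hζ]
        apply hasDerivAt_pi.2
        intro i
        have key : F α₂ α₄ r K (ζ s)
            = ![F α₂ α₄ r K (η s) 0, -(F α₂ α₄ r K (η s) 1), -(F α₂ α₄ r K (η s) 2)] :=
          F_equivar2 α₂ α₄ r K (η s)
        rw [key]
        fin_cases i <;> simp only [Matrix.cons_val_zero, Matrix.cons_val_one, Matrix.head_cons,
          Fin.isValue, Matrix.cons_val_two, Matrix.tail_cons]
        · exact hcomp s 0
        · exact (hcomp s 1).const_sub (2 * π)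
        · exact (hcomp s 2).neg
      have hζ0 : ζ 0 = η 0 := by
        funext i
        fin_cases i <;> simp [hζ, h1, h2] <;> ring
      have := ODE_unique_global hlip hζd hη hζ0 t
      have e1 := congrFun this 1
      have e2 := congrFun this 2
      simp [hζ] at e1 e2
      constructor
      · linarith
      · linarith
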